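/- Let p(r) = w₀ + w₁r + w₂r²/2 + w₃r³/6 + w₄r⁴/24 with max_i |w_i| = 1. Then sup_{r ∈ [0,1]} max(|p(r)|, |p'(r)|) ≥ c for some absolute constant c > 0 (e.g. c = 1/100 works). -/

import Mathlib

/-!
The five values of `p` at the nodes `0, 1/4, 1/2, 3/4, 1` determine its coefficients linearly:
inverting the (scaled) Vandermonde system expresses each `wᵢ` as a combination of these values
whose coefficients have absolute sum at most `4096` (the last row is `256` times the fourth
forward difference). So if `|p|` were below `1/8192` on `[0, 1]`, every `|wᵢ|` would be at most
`1/2`, contradicting `‖w‖_∞ = 1`.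
-/

/-- p(r) = w₀ + w₁r + w₂r²/2 + w₃r³/6 + w₄r⁴/24. -/
noncomputable def pPoly (w : Fin 5 → ℝ) (r : ℝ) : ℝ :=
  w 0 + w 1 * r + w 2 * (r ^ 2 / 2) + w 3 * (r ^ 3 / 6) + w 4 * (r ^ 4 / 24)

/-- p'(r). -/
noncomputable def pPoly' (w : Fin 5 → ℝ) (r : ℝ) : ℝ :=
  w 1 + w 2 * r + w 3 * (r ^ 2 / 2) + w 4 * (r ^ 3 / 6)

open Finset

/-- The inverse of the matrix `((j / 4) ^ i / i!)_{j i}`, which sends `w` to the values of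
`pPoly w` at the nodes. -/
noncomputable def nodeInversion : Matrix (Fin 5) (Fin 5) ℝ :=
  !![1, 0, 0, 0, 0;
    -25/3, 16, -12, 16/3, -1;
    140/3, -416/3, 152, -224/3, 44/3;
    -160, 576, -768, 448, -96;
    256, -1024, 1536, -1024, 256]

theorem coeff_eq_sum_nodeInversion_mul_pPoly (w : Fin 5 → ℝ) (i : Fin 5) :
    w i = ∑ j, nodeInversion i j * pPoly w ((j : ℕ) / 4) := by
  fin_cases i <;>
    simp only [Fin.zero_eta, Fin.mk_one, Fin.reduceFinMk, Fin.sum_univ_five, nodeInversion,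
      pPoly, Matrix.of_apply, Matrix.cons_val', Matrix.cons_val, Matrix.cons_val_fin_one] <;>
    norm_num <;> ring

theorem sum_abs_nodeInversion_le (i : Fin 5) : ∑ j, |nodeInversion i j| ≤ 4096 := by
  fin_cases i <;> norm_num [Fin.sum_univ_succ, nodeInversion, abs_of_nonneg, abs_of_neg]

theorem abs_sum_mul_le_of_abs_le {ι : Type*} (s : Finset ι) (a x : ι → ℝ) {ε : ℝ}
    (hx : ∀ j ∈ s, |x j| ≤ ε) : |∑ j ∈ s, a j * x j| ≤ (∑ j ∈ s, |a j|) * ε :=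
  calc |∑ j ∈ s, a j * x j| ≤ ∑ j ∈ s, |a j| * |x j| := by
        simpa only [abs_mul] using abs_sum_le_sum_abs (fun j => a j * x j) s
    _ ≤ ∑ j ∈ s, |a j| * ε :=
        sum_le_sum fun j hj => mul_le_mul_of_nonneg_left (hx j hj) (abs_nonneg _)
    _ = (∑ j ∈ s, |a j|) * ε := (sum_mul ..).symm

theorem abs_coeff_le_of_abs_pPoly_nodes_le (w : Fin 5 → ℝ) {ε : ℝ}
    (hw : ∀ j : Fin 5, |pPoly w ((j : ℕ) / 4)| ≤ ε) (i : Fin 5) : |w i| ≤ 4096 * ε := by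
  rw [coeff_eq_sum_nodeInversion_mul_pPoly w i]
  exact (abs_sum_mul_le_of_abs_le _ _ _ fun j _ => hw j).trans
    (mul_le_mul_of_nonneg_right (sum_abs_nodeInversion_le i) ((abs_nonneg _).trans (hw 0)))

theorem node_mem_Icc (j : Fin 5) : ((j : ℕ) / 4 : ℝ) ∈ Set.Icc (0 : ℝ) 1 := by
  have : ((j : ℕ) : ℝ) ≤ 4 := by exact_mod_cast Nat.lt_succ_iff.mp j.isLt
  constructor <;> [positivity; linarith]

/-- Quantitative non-degeneracy: if ‖w‖_∞ = 1 then max(|p|,|p'|) is ≥ c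
somewhere on [0,1], for some absolute constant c > 0. -/
theorem poly_nondegeneracy :
    ∃ c : ℝ, c > 0 ∧ ∀ w : Fin 5 → ℝ,
      (∀ i, |w i| ≤ 1) → (∃ i, |w i| = 1) →
      ∃ r ∈ Set.Icc (0 : ℝ) 1, max |pPoly w r| |pPoly' w r| ≥ c := by
  refine ⟨1 / 8192, by norm_num, fun w _ ⟨i, hi⟩ => ?_⟩
  by_contra! hsmall
  have hnodes (j : Fin 5) : |pPoly w ((j : ℕ) / 4)| ≤ 1 / 8192 :=
    ((le_max_left _ _).trans_lt (hsmall _ (node_mem_Icc j))).le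
  have := abs_coeff_le_of_abs_pPoly_nodes_le w hnodes i
  linarith
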